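/- Let r ≥ 3 be an integer, L = {0, 1/2, 1, ..., (r-2)/2}, H_{jk} = (-1)^{2j+2k} sin(π(2j+1)(2k+1)/r)/sin(π/r), dim_q j = H_{0j}, and N = Σ_{j∈L} (dim_q j)². Then the Fourier transform kernel A_{jk} = H_{jk}/dim_q j has explicit inverse B_{kl} = H_{kl} · dim_q l / N; that is, for all j, l ∈ L, Σ_{k∈L} (H_{jk}/dim_q j) · (H_{kl} · dim_q l / N) = δ_{jl}. -/

import Mathlib

/-!
Up to signs, `H` is the discrete sine transform `sin (π m n / r)`, `1 ≤ m, n ≤ r - 1`, which is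
orthogonal up to the factor `r / 2`: writing `sin x sin y = (cos (x - y) - cos (x + y)) / 2`, this
reduces to the Dirichlet-kernel sum `∑_{k<r} cos (π t k / r) = sin (π t / 2) ^ 2` for integers
`0 < |t| < 2r`. The signs `(-1)^(j+k) (-1)^(k+l)` collapse to `(-1)^(j+l)`, so
`∑_k H_{jk} H_{kl} = δ_{jl} r / (2 sin² (π / r))`, and the case `j = l = 0` identifies this
constant with `N` because `H` is symmetric.
-/

open Real Finset

/-- The Fourier kernel `H a b` for spins indexed by integers `a = 2j`, `b = 2k`:
`H_{jk} = (-1)^{2j+2k} sin(π(2j+1)(2k+1)/r)/sin(π/r)`. -/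
noncomputable def HopfH (r a b : ℕ) : ℝ :=
  (-1) ^ (a + b) * Real.sin (π * (a + 1) * (b + 1) / r) / Real.sin (π / r)

/-- The quantum dimension `dim_q j = H_{0j}`, indexed by `a = 2j`. -/
noncomputable def dimq (r a : ℕ) : ℝ := HopfH r 0 a

/-- The normalisation constant `N = Σ_{j∈L} (dim_q j)²`. -/
noncomputable def Nconst (r : ℕ) : ℝ := ∑ a ∈ Finset.range (r - 1), (dimq r a) ^ 2

theorem sum_range_cos_pi_mul_div {r : ℕ} {t : ℤ} (ht : sin (π * t / (2 * r)) ≠ 0) :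
    ∑ k ∈ range r, cos (π * t * k / r) = sin (π * t / 2) ^ 2 := by
  have hr : (r : ℝ) ≠ 0 := by rintro hr; simp [hr] at ht
  have h := sin_mul_sum_cos r (π * t / r) 0
  have hhalf : π * t / r / 2 = π * t / (2 * r) := by ring
  have hn : r * (π * t / r) / 2 = π * t / 2 := by field_simp
  have hn1 : (r - 1) * (π * t / r) / 2 + 0 = π * t / 2 - π * t / (2 * r) := by field_simp; ring
  have hsum : ∑ k ∈ range r, cos (π * t * k / r) = ∑ k ∈ range r, cos (π * t / r * k + 0) :=
    sum_congr rfl fun k _ => by ring_nf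
  have hsin_t : sin (π * t / 2) * cos (π * t / 2) = 0 := by
    rw [← mul_right_inj' two_ne_zero, ← mul_assoc, ← sin_two_mul, mul_zero,
      show 2 * (π * t / 2) = t * π by ring, sin_int_mul_pi]
  simp only [hhalf, hn, hn1, cos_sub] at h
  refine mul_left_cancel₀ ht ?_
  rw [hsum, h]
  linear_combination cos (π * t / (2 * r)) * hsin_t

theorem sin_pi_mul_div_two_mul_ne_zero {r : ℕ} {t : ℤ} (ht : t ≠ 0) (htr : |t| < 2 * r) :
    sin (π * t / (2 * r)) ≠ 0 := by
  have hr : (0 : ℝ) < 2 * r := by exact_mod_cast (abs_nonneg t).trans_lt htr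
  have htr' : |(t : ℝ)| < 2 * r := by exact_mod_cast htr
  rw [abs_lt] at htr'
  rw [Ne, sin_eq_zero_iff_of_lt_of_lt, div_eq_zero_iff]
  · simp [pi_ne_zero, ht, hr.ne']
  · rw [lt_div_iff₀ hr]; nlinarith [pi_pos]
  · rw [div_lt_iff₀ hr]; nlinarith [pi_pos]

theorem sum_range_sin_mul_sin {r m n : ℕ} (hm : 0 < m) (hmr : m < r) (hn : 0 < n) (hnr : n < r) :
    ∑ k ∈ range r, sin (π * m * k / r) * sin (π * n * k / r) = if m = n then (r : ℝ) / 2 else 0 := by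
  have hprod : ∀ k : ℕ, sin (π * m * k / r) * sin (π * n * k / r) =
      (cos (π * ((m - n : ℤ) : ℝ) * k / r) - cos (π * ((m + n : ℤ) : ℝ) * k / r)) / 2 := by
    intro k
    push_cast
    rw [show π * (m - n) * k / r = π * m * k / r - π * n * k / r by ring,
      show π * (m + n) * k / r = π * m * k / r + π * n * k / r by ring, cos_sub, cos_add]
    ring
  rw [sum_congr rfl fun k _ => hprod k, ← sum_div, sum_sub_distrib,
    sum_range_cos_pi_mul_div (t := m + n) (sin_pi_mul_div_two_mul_ne_zero (by omega) (by rw [abs_lt]; omega))]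
  split_ifs with hmn
  · subst hmn
    rw [show ((m : ℤ) + m : ℤ) = (m : ℝ) * 2 by push_cast; ring,
      show π * ((m : ℝ) * 2) / 2 = m * π by ring, sin_nat_mul_pi]
    simp
  · rw [sum_range_cos_pi_mul_div (t := m - n) (sin_pi_mul_div_two_mul_ne_zero (by omega) (by rw [abs_lt]; omega)),
      show π * ((m + n : ℤ) : ℝ) / 2 = π * ((m - n : ℤ) : ℝ) / 2 + n * π by push_cast; ring,
      sin_add_nat_mul_pi, mul_pow, ← pow_mul, pow_mul', neg_one_sq, one_pow]
    ring

theorem sin_pi_mul_div_pos {r m : ℕ} (hm : 0 < m) (hmr : m < r) : 0 < sin (π * m / r) := by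
  have hr : (0 : ℝ) < r := by exact_mod_cast hm.trans hmr
  have hmr' : (m : ℝ) < r := by exact_mod_cast hmr
  apply sin_pos_of_pos_of_lt_pi
  · have : (0 : ℝ) < m := by exact_mod_cast hm
    positivity
  · rw [div_lt_iff₀ hr]; nlinarith [pi_pos]

theorem sin_pi_div_pos {r : ℕ} (hr : 1 < r) : 0 < sin (π / r) := by
  simpa using sin_pi_mul_div_pos (m := 1) one_pos hr

theorem HopfH_comm (r a b : ℕ) : HopfH r a b = HopfH r b a := by
  unfold HopfH
  rw [add_comm a b, mul_right_comm π]

theorem sum_HopfH_mul_HopfH {r j l : ℕ} (hj : j + 1 < r) (hl : l + 1 < r) :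
    ∑ k ∈ range (r - 1), HopfH r j k * HopfH r k l =
      if j = l then (r : ℝ) / (2 * sin (π / r) ^ 2) else 0 := by
  set f : ℕ → ℝ := fun k => sin (π * (j + 1 : ℕ) * k / r) * sin (π * (l + 1 : ℕ) * k / r)
  have hterm : ∀ k, HopfH r j k * HopfH r k l = (-1) ^ (j + l) / sin (π / r) ^ 2 * f (k + 1) := by
    intro k
    have hsign : (-1 : ℝ) ^ (j + k) * (-1) ^ (l + k) = (-1) ^ (j + l) := by
      rw [← pow_add, show j + k + (l + k) = j + l + 2 * k by ring, pow_add, pow_mul, neg_one_sq,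
        one_pow, mul_one]
    rw [HopfH_comm r k l]
    simp only [HopfH, f, ← hsign]
    push_cast
    ring
  have hshift : ∑ k ∈ range (r - 1), f (k + 1) = ∑ k ∈ range r, f k := by
    rw [← Nat.sub_add_cancel (by omega : 1 ≤ r), sum_range_succ' f]
    simp [f]
  rw [sum_congr rfl fun k _ => hterm k, ← mul_sum, hshift,
    sum_range_sin_mul_sin (by omega) hj (by omega) hl]
  simp only [Nat.add_right_cancel_iff]
  split_ifs with hjl
  · subst hjl
    rw [← two_mul, pow_mul, neg_one_sq, one_pow]
    field_simp
  · rw [mul_zero]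

theorem Nconst_eq {r : ℕ} (hr : 1 < r) : Nconst r = r / (2 * sin (π / r) ^ 2) := by
  simpa [Nconst, dimq, sq, HopfH_comm r _ 0] using sum_HopfH_mul_HopfH (j := 0) (l := 0) hr hr

theorem dimq_ne_zero {r a : ℕ} (ha : a + 1 < r) : dimq r a ≠ 0 := by
  have hsin : sin (π * (0 + 1) * (a + 1) / r) ≠ 0 := by
    have := sin_pi_mul_div_pos (m := a + 1) a.succ_pos ha
    push_cast at this
    rw [zero_add, mul_one]
    exact this.ne'
  exact div_ne_zero (mul_ne_zero (pow_ne_zero _ (by norm_num)) (by exact_mod_cast hsin))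
    (sin_pi_div_pos (by omega)).ne'

/-- Explicit inverse of the Fourier transform kernel `A_{jk} = H_{jk}/dim_q j`:
`Σ_{k∈L} (H_{jk}/dim_q j) · (H_{kl} dim_q l / N) = δ_{jl}`. -/
theorem fourier_kernel_explicit_inverse (r : ℕ) (hr : 3 ≤ r)
    (j l : ℕ) (hj : j ≤ r - 2) (hl : l ≤ r - 2) :
    ∑ k ∈ Finset.range (r - 1),
        (HopfH r j k / dimq r j) * (HopfH r k l * dimq r l / Nconst r)
      = (if j = l then (1 : ℝ) else 0) := by
  have hjr : j + 1 < r := by omega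
  have hlr : l + 1 < r := by omega
  have hN : Nconst r ≠ 0 := by
    rw [Nconst_eq (by omega)]
    have := (sin_pi_div_pos (r := r) (by omega)).ne'
    positivity
  calc ∑ k ∈ range (r - 1), (HopfH r j k / dimq r j) * (HopfH r k l * dimq r l / Nconst r)
      = dimq r l / (dimq r j * Nconst r) * ∑ k ∈ range (r - 1), HopfH r j k * HopfH r k l := by
        rw [mul_sum]
        exact sum_congr rfl fun k _ => by ring
    _ = if j = l then 1 else 0 := by
        rw [sum_HopfH_mul_HopfH hjr hlr, ← Nconst_eq (by omega)]
        split_ifs with hjl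
        · subst hjl
          field_simp [dimq_ne_zero hjr]
        · rw [mul_zero]
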